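/- arXiv:2104.12102 — 5 statements merged into one kernel-verified Lean document; each statement's English description precedes it below -/
import Mathlib

section
/- Let p and q be probability mass functions on a finite product space X = V^I. Suppose (i) q factors as q(x) = ∏_{c ∈ C} φ_c(x_c) with φ_c ≥ 0, and (ii) for every block c ∈ C, the marginals agree: q_{X_c} = p_{X_c}. Define S = { x | ∀ c ∈ C, p_{X_c}(x_c) > 0 }. Then the support of q equals S, i.e., q(x) > 0 ↔ ∀ c ∈ C, p_{X_c}(x_c) > 0. -/
/-- Theorem 1 (finite version): the support of the MRF approximation `q` of `p`
equals the set of configurations all of whose block restrictions have positive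
`p`-marginal probability. -/
theorem stmt_2 {I V : Type*} [Fintype I] [DecidableEq I] [Fintype V] [DecidableEq V]
    (C : Finset (Finset I))
    (p q : (I → V) → ℝ)
    (hp0 : ∀ x, 0 ≤ p x) (hp1 : ∑ x, p x = 1)
    (hq0 : ∀ x, 0 ≤ q x) (hq1 : ∑ x, q x = 1)
    (φ : Finset I → (I → V) → ℝ)
    (hφ0 : ∀ c ∈ C, ∀ x, 0 ≤ φ c x)
    (hφloc : ∀ c ∈ C, ∀ x y : I → V, (∀ i ∈ c, x i = y i) → φ c x = φ c y)
    (hfact : ∀ x, q x = ∏ c ∈ C, φ c x)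
    (hmarg : ∀ c ∈ C, ∀ x : I → V,
      (∑ y ∈ Finset.univ.filter (fun y => ∀ i ∈ c, y i = x i), q y) =
        ∑ y ∈ Finset.univ.filter (fun y => ∀ i ∈ c, y i = x i), p y) :
    ∀ x : I → V, 0 < q x ↔
      ∀ c ∈ C, 0 < ∑ y ∈ Finset.univ.filter (fun y => ∀ i ∈ c, y i = x i), p y := by
  intro x
  constructor
  · intro hqx c hc
    rw [← hmarg c hc x]
    have hx : x ∈ Finset.univ.filter (fun y => ∀ i ∈ c, y i = x i) := by simp
    exact lt_of_lt_of_le hqx (Finset.single_le_sum (fun y _ => hq0 y) hx)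
  · intro h
    rw [hfact]
    apply Finset.prod_pos
    intro c hc
    have hpc := h c hc
    rw [← hmarg c hc x] at hpc
    have hex : ∃ z, z ∈ Finset.univ.filter (fun y => ∀ i ∈ c, y i = x i) ∧
        0 < q z := by
      by_contra hcon
      push_neg at hcon
      have hz : ∑ y ∈ Finset.univ.filter (fun y => ∀ i ∈ c, y i = x i), q y ≤ 0 :=
        Finset.sum_nonpos (fun y hy => hcon y hy)
      linarith
    obtain ⟨y, hy, hqy⟩ := hex
    simp only [Finset.mem_filter, Finset.mem_univ, true_and] at hy
    have hprod : 0 < ∏ d ∈ C, φ d y := (hfact y) ▸ hqy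
    have hne : φ c y ≠ 0 := by
      intro h0
      rw [Finset.prod_eq_zero hc h0] at hprod
      exact lt_irrefl 0 hprod
    have heq : φ c y = φ c x := hφloc c hc y x hy
    exact lt_of_le_of_ne (hφ0 c hc x) (fun h0 => hne (heq.trans h0.symm))
end

section
/- Let q be a pmf on a finite product space factoring as q(x) = ∏_{c ∈ C} φ_c(x_c) with φ_c ≥ 0. If x is a configuration such that the marginal q_{X_c}(x_c) > 0 for every c ∈ C, then q(x) > 0. -/
/-- If all block marginals of a factorized pmf `q` are positive at `x`,
then `q x > 0`. -/
theorem stmt_3 {I V : Type*} [Fintype I] [DecidableEq I] [Fintype V] [DecidableEq V]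
    (C : Finset (Finset I))
    (q : (I → V) → ℝ) (hq0 : ∀ x, 0 ≤ q x) (hq1 : ∑ x, q x = 1)
    (φ : Finset I → (I → V) → ℝ)
    (hφ0 : ∀ c ∈ C, ∀ x, 0 ≤ φ c x)
    (hφloc : ∀ c ∈ C, ∀ x y : I → V, (∀ i ∈ c, x i = y i) → φ c x = φ c y)
    (hfact : ∀ x, q x = ∏ c ∈ C, φ c x)
    (x : I → V)
    (hx : ∀ c ∈ C, 0 < ∑ y ∈ Finset.univ.filter (fun y => ∀ i ∈ c, y i = x i), q y) :
    0 < q x := by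
  rw [hfact]
  apply Finset.prod_pos
  intro c hc
  -- the marginal sum is positive, so some term is positive
  obtain ⟨y, hy, hqy⟩ : ∃ z ∈ Finset.univ.filter (fun z : I → V => ∀ i ∈ c, z i = x i), 0 < q z := by
    by_contra h
    push_neg at h
    have : ∑ y ∈ Finset.univ.filter (fun y => ∀ i ∈ c, y i = x i), q y ≤ 0 :=
      Finset.sum_nonpos fun y hy => h y hy
    exact absurd (hx c hc) (not_lt.mpr this)
  have hyc : ∀ i ∈ c, y i = x i := (Finset.mem_filter.mp hy).2
  have hφy : 0 < φ c y := by
    rcases lt_or_eq_of_le (hφ0 c hc y) with h | h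
    · exact h
    · exfalso
      have : q y = 0 := by
        rw [hfact]
        exact Finset.prod_eq_zero hc h.symm
      linarith
  rwa [hφloc c hc x y fun i hi => (hyc i hi).symm]
end

section
/- On a finite set Ω, among all probability mass functions r with full support satisfying a family of linear marginal constraints r_{X_c} = p_{X_c} for c ∈ C (where p is a fixed pmf on Ω = V^I with full support), any pmf of the form q(x) = ∏_{c ∈ C} φ_c(x_c) (with φ_c > 0) satisfying the constraints maximizes Shannon entropy H(r) = −∑_x r(x) log r(x) among all such r. That is, if q satisfies the constraints and factors as a positive product over blocks, then H(r) ≤ H(q) for every pmf r satisfying the same marginal constraints. -/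
/-!
The entropy of `r` is bounded by its cross entropy `-∑ r log q` against any positive `q` of the
same mass (Gibbs' inequality). When `q` factors as `∏ c, φ c` over the blocks, `log q` is a sum of
functions each depending only on one block, so its expectation under `r` is determined by the
block marginals of `r`; these agree with those of `q`, hence the cross entropy equals `H(q)`.
-/

open Finset Real

theorem mul_log_sub_mul_log_le {a b : ℝ} (ha : 0 ≤ a) (hb : 0 < b) :
    a * log b - a * log a ≤ b - a := by
  rcases ha.eq_or_lt with rfl | ha
  · simpa using hb.le
  calc a * log b - a * log a = a * log (b / a) := by rw [log_div hb.ne' ha.ne']; ring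
    _ ≤ a * (b / a - 1) := by gcongr; exact log_le_sub_one_of_pos (by positivity)
    _ = b - a := by field_simp

theorem sum_mul_log_le_sum_mul_log {ι : Type*} [Fintype ι] {r q : ι → ℝ}
    (hr : ∀ x, 0 ≤ r x) (hq : ∀ x, 0 < q x) (hrq : ∑ x, r x = ∑ x, q x) :
    ∑ x, r x * log (q x) ≤ ∑ x, r x * log (r x) := by
  have h : ∑ x, (r x * log (q x) - r x * log (r x)) ≤ ∑ x, (q x - r x) :=
    sum_le_sum fun x _ => mul_log_sub_mul_log_le (hr x) (hq x)
  rw [sum_sub_distrib, sum_sub_distrib, hrq] at h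
  linarith

section Marginal

variable {I : Type*} [Fintype I] [DecidableEq I] {β : I → Type*} [∀ i, Fintype (β i)]
  [∀ i, DecidableEq (β i)]

def marginal (c : Finset I) (r : (∀ i, β i) → ℝ) (x : ∀ i, β i) : ℝ :=
  ∑ y ∈ univ.filter (fun y => ∀ i ∈ c, y i = x i), r y

theorem sum_restrict_eq_mul_marginal {c : Finset I} {g : (∀ i, β i) → ℝ}
    (hg : ∀ x y, (∀ i ∈ c, x i = y i) → g x = g y) (r : (∀ i, β i) → ℝ) (x : ∀ i, β i) :
    ∑ y ∈ univ.filter (fun y => c.restrict y = c.restrict x), r y * g y =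
      marginal c r x * g x := by
  have hfiber : univ.filter (fun y => c.restrict y = c.restrict x) =
      univ.filter (fun y => ∀ i ∈ c, y i = x i) := by
    ext y
    simp [funext_iff, Finset.restrict]
  rw [marginal, hfiber, sum_mul]
  refine sum_congr rfl fun y hy => ?_
  rw [hg y x (mem_filter.mp hy).2]

theorem sum_mul_eq_of_marginal_eq {c : Finset I} {g r q : (∀ i, β i) → ℝ}
    (hg : ∀ x y, (∀ i ∈ c, x i = y i) → g x = g y) (hrq : ∀ x, marginal c r x = marginal c q x) :
    ∑ x, r x * g x = ∑ x, q x * g x := by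
  have hfibers (s : (∀ i, β i) → ℝ) := sum_fiberwise_of_maps_to (s := univ)
    (t := univ.image c.restrict) (fun x _ => mem_image_of_mem _ (mem_univ x)) (fun x => s x * g x)
  rw [← hfibers r, ← hfibers q]
  refine sum_congr rfl fun u hu => ?_
  obtain ⟨x, -, rfl⟩ := mem_image.mp hu
  rw [sum_restrict_eq_mul_marginal hg, sum_restrict_eq_mul_marginal hg, hrq]

end Marginal

theorem stmt_5_general {I V : Type*} [Fintype I] [DecidableEq I] [Fintype V] [DecidableEq V]
    (C : Finset (Finset I))
    (p : (I → V) → ℝ)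
    (q : (I → V) → ℝ) (hq1 : ∑ x, q x = 1)
    (φ : Finset I → (I → V) → ℝ)
    (hφpos : ∀ c ∈ C, ∀ x, 0 < φ c x)
    (hφloc : ∀ c ∈ C, ∀ x y : I → V, (∀ i ∈ c, x i = y i) → φ c x = φ c y)
    (hfact : ∀ x, q x = ∏ c ∈ C, φ c x)
    (hqmarg : ∀ c ∈ C, ∀ x : I → V,
      (∑ y ∈ Finset.univ.filter (fun y => ∀ i ∈ c, y i = x i), q y) =
        ∑ y ∈ Finset.univ.filter (fun y => ∀ i ∈ c, y i = x i), p y)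
    (r : (I → V) → ℝ) (hr0 : ∀ x, 0 < r x) (hr1 : ∑ x, r x = 1)
    (hrmarg : ∀ c ∈ C, ∀ x : I → V,
      (∑ y ∈ Finset.univ.filter (fun y => ∀ i ∈ c, y i = x i), r y) =
        ∑ y ∈ Finset.univ.filter (fun y => ∀ i ∈ c, y i = x i), p y) :
    (-∑ x, r x * Real.log (r x)) ≤ -∑ x, q x * Real.log (q x) := by
  have hq0 x : 0 < q x := hfact x ▸ prod_pos fun c hc => hφpos c hc x
  have hlog x : log (q x) = ∑ c ∈ C, log (φ c x) := by
    rw [hfact x, log_prod fun c hc => (hφpos c hc x).ne']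
  have hcross : ∑ x, r x * log (q x) = ∑ x, q x * log (q x) := by
    simp_rw [hlog, mul_sum]
    rw [sum_comm, sum_comm (s := univ)]
    refine sum_congr rfl fun c hc => sum_mul_eq_of_marginal_eq
      (fun x y hxy => by rw [hφloc c hc x y hxy]) fun x => ?_
    exact (hrmarg c hc x).trans (hqmarg c hc x).symm
  have hgibbs := sum_mul_log_le_sum_mul_log (fun x => (hr0 x).le) hq0 (hr1.trans hq1.symm)
  linarith

/-- Gibbs variational principle (Theorem 2, finite form): among all full-support
pmfs `r` with the prescribed block marginals of `p`, a factorized pmf `q`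
(with strictly positive potentials) satisfying the constraints maximizes the
Shannon entropy. -/
theorem stmt_5 {I V : Type*} [Fintype I] [DecidableEq I] [Fintype V] [DecidableEq V]
    (C : Finset (Finset I))
    (p : (I → V) → ℝ) (hp0 : ∀ x, 0 < p x) (hp1 : ∑ x, p x = 1)
    (q : (I → V) → ℝ) (hq0 : ∀ x, 0 ≤ q x) (hq1 : ∑ x, q x = 1)
    (φ : Finset I → (I → V) → ℝ)
    (hφpos : ∀ c ∈ C, ∀ x, 0 < φ c x)
    (hφloc : ∀ c ∈ C, ∀ x y : I → V, (∀ i ∈ c, x i = y i) → φ c x = φ c y)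
    (hfact : ∀ x, q x = ∏ c ∈ C, φ c x)
    (hqmarg : ∀ c ∈ C, ∀ x : I → V,
      (∑ y ∈ Finset.univ.filter (fun y => ∀ i ∈ c, y i = x i), q y) =
        ∑ y ∈ Finset.univ.filter (fun y => ∀ i ∈ c, y i = x i), p y)
    (r : (I → V) → ℝ) (hr0 : ∀ x, 0 < r x) (hr1 : ∑ x, r x = 1)
    (hrmarg : ∀ c ∈ C, ∀ x : I → V,
      (∑ y ∈ Finset.univ.filter (fun y => ∀ i ∈ c, y i = x i), r y) =
        ∑ y ∈ Finset.univ.filter (fun y => ∀ i ∈ c, y i = x i), p y) :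
    (-∑ x, r x * Real.log (r x)) ≤ -∑ x, q x * Real.log (q x) :=
  stmt_5_general C p q hq1 φ hφpos hφloc hfact hqmarg r hr0 hr1 hrmarg
end

section
/- Let p, q be pmfs on V^I where q satisfies the conditions of the MRF approximation (same block marginals as p for all c in C, and q factors over the blocks with nonnegative potentials). Then supp(p) ⊆ supp(q). -/
/-- The MRF approximation `q` of `p` (factorizing over blocks, with the same
block marginals as `p`) assigns positive probability to every configuration in
the support of `p`: `supp(p) ⊆ supp(q)`. -/
theorem stmt_11 {I V : Type*} [Fintype I] [DecidableEq I] [Fintype V] [DecidableEq V]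
    (C : Finset (Finset I))
    (p q : (I → V) → ℝ)
    (hp0 : ∀ x, 0 ≤ p x) (hp1 : ∑ x, p x = 1)
    (hq0 : ∀ x, 0 ≤ q x) (hq1 : ∑ x, q x = 1)
    (φ : Finset I → (I → V) → ℝ)
    (hφ0 : ∀ c ∈ C, ∀ x, 0 ≤ φ c x)
    (hφloc : ∀ c ∈ C, ∀ x y : I → V, (∀ i ∈ c, x i = y i) → φ c x = φ c y)
    (hfact : ∀ x, q x = ∏ c ∈ C, φ c x)
    (hmarg : ∀ c ∈ C, ∀ x : I → V,
      (∑ y ∈ Finset.univ.filter (fun y => ∀ i ∈ c, y i = x i), q y) =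
        ∑ y ∈ Finset.univ.filter (fun y => ∀ i ∈ c, y i = x i), p y) :
    ∀ x : I → V, 0 < p x → 0 < q x := by
  intro x hpx
  by_contra h
  have hqx : q x = 0 := le_antisymm (not_lt.mp h) (hq0 x)
  rw [hfact] at hqx
  obtain ⟨c, hc, hφc⟩ := Finset.prod_eq_zero_iff.mp hqx
  -- the sum of p over the set agreeing with x on c is positive
  have hxmem : x ∈ Finset.univ.filter (fun y => ∀ i ∈ c, y i = x i) := by
    simp
  have hppos : 0 < ∑ y ∈ Finset.univ.filter (fun y => ∀ i ∈ c, y i = x i), p y :=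
    Finset.sum_pos' (fun y _ => hp0 y) ⟨x, hxmem, hpx⟩
  have hqpos : 0 < ∑ y ∈ Finset.univ.filter (fun y => ∀ i ∈ c, y i = x i), q y := by
    rw [hmarg c hc x]; exact hppos
  obtain ⟨y, hy, hqy⟩ := Finset.exists_ne_zero_of_sum_ne_zero (ne_of_gt hqpos)
  apply hqy
  rw [hfact]
  apply Finset.prod_eq_zero hc
  have hagree : ∀ i ∈ c, y i = x i := (Finset.mem_filter.mp hy).2
  rw [hφloc c hc y x hagree, hφc]
end

section
/- Uniqueness of the maximum-entropy factorized distribution: if q₁ and q₂ are pmfs on a finite product space, both with full support, both factoring over the same family of blocks C with strictly positive potentials, and both having the same block marginals for all c ∈ C, then q₁ = q₂. -/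
/-!
The difference of the log-densities of two positive distributions factoring over `C` is a sum
of functions each depending only on the coordinates in one block `c ∈ C`. Equal block marginals
give each such function the same expectation under `q₁` and `q₂`, so
`∑ₓ (q₁ x - q₂ x) (log q₁ x - log q₂ x) = 0`. Every summand is nonnegative, and positive where
`q₁ x ≠ q₂ x`, since `log` is strictly increasing.
-/

open Finset Real

theorem sum_mul_eq_of_sum_fiber_eq {α β R : Type*} [Fintype α] [DecidableEq β]
    [NonUnitalNonAssocSemiring R] (f : α → β) {p q G : α → R}
    (hG : ∀ x y, f x = f y → G x = G y)
    (hpq : ∀ x, ∑ y with f y = f x, p y = ∑ y with f y = f x, q y) :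
    ∑ x, p x * G x = ∑ x, q x * G x := by
  have hfiber : ∀ r : α → R,
      ∑ x, r x * G x = ∑ b ∈ univ.image f, ∑ x with f x = b, r x * G x := fun r =>
    (sum_fiberwise_of_maps_to (fun x _ => mem_image_of_mem f (mem_univ x)) _).symm
  rw [hfiber p, hfiber q]
  refine sum_congr rfl fun b hb => ?_
  obtain ⟨w, -, rfl⟩ := mem_image.mp hb
  have hconst : ∀ r : α → R,
      ∑ x with f x = f w, r x * G x = (∑ x with f x = f w, r x) * G w := fun r => by
    rw [sum_mul]
    exact sum_congr rfl fun x hx => by rw [hG x w (mem_filter.mp hx).2]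
  rw [hconst, hconst, hpq]

theorem Finset.restrict_eq_restrict_iff {ι V : Type*} (c : Finset ι) (x y : ι → V) :
    c.restrict x = c.restrict y ↔ ∀ i ∈ c, x i = y i := by
  simp [funext_iff, Finset.restrict]

theorem log_prod_of_prod_ne_zero {ι : Type*} {s : Finset ι} {f : ι → ℝ}
    (h : ∏ i ∈ s, f i ≠ 0) : log (∏ i ∈ s, f i) = ∑ i ∈ s, log (f i) :=
  log_prod (prod_ne_zero_iff.mp h)

theorem sub_mul_log_sub_log_pos {a b : ℝ} (ha : 0 < a) (hb : 0 < b) (hab : a ≠ b) :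
    0 < (a - b) * (log a - log b) := by
  rcases hab.lt_or_gt with h | h
  · exact mul_pos_of_neg_of_neg (sub_neg.2 h) (sub_neg.2 (log_lt_log ha h))
  · exact mul_pos (sub_pos.2 h) (sub_pos.2 (log_lt_log hb h))

theorem eq_of_sum_mul_log_sub_log_eq {α : Type*} [Fintype α] {p q : α → ℝ}
    (hp : ∀ x, 0 < p x) (hq : ∀ x, 0 < q x)
    (h : ∑ x, p x * (log (p x) - log (q x)) = ∑ x, q x * (log (p x) - log (q x))) :
    p = q := by
  by_contra hne
  obtain ⟨x, hx⟩ := Function.ne_iff.mp hne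
  have hnonneg : ∀ y ∈ univ, 0 ≤ (p y - q y) * (log (p y) - log (q y)) := fun y _ => by
    rcases eq_or_ne (p y) (q y) with hy | hy
    · simp [hy]
    · exact (sub_mul_log_sub_log_pos (hp y) (hq y) hy).le
  have hpos := sum_pos' hnonneg ⟨x, mem_univ x, sub_mul_log_sub_log_pos (hp x) (hq x) hx⟩
  simp only [sub_mul, sum_sub_distrib, h, sub_self] at hpos
  exact lt_irrefl 0 hpos

theorem stmt_19_general {I V : Type*} [Fintype I] [DecidableEq I] [Fintype V] [DecidableEq V]
    (C : Finset (Finset I))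
    (q₁ q₂ : (I → V) → ℝ)
    (hq₁0 : ∀ x, 0 < q₁ x)
    (hq₂0 : ∀ x, 0 < q₂ x)
    (φ₁ φ₂ : Finset I → (I → V) → ℝ)
    (hφ₁loc : ∀ c ∈ C, ∀ x y : I → V, (∀ i ∈ c, x i = y i) → φ₁ c x = φ₁ c y)
    (hφ₂loc : ∀ c ∈ C, ∀ x y : I → V, (∀ i ∈ c, x i = y i) → φ₂ c x = φ₂ c y)
    (hfact₁ : ∀ x, q₁ x = ∏ c ∈ C, φ₁ c x)
    (hfact₂ : ∀ x, q₂ x = ∏ c ∈ C, φ₂ c x)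
    (hmarg : ∀ c ∈ C, ∀ x : I → V,
      (∑ y ∈ Finset.univ.filter (fun y => ∀ i ∈ c, y i = x i), q₁ y) =
        ∑ y ∈ Finset.univ.filter (fun y => ∀ i ∈ c, y i = x i), q₂ y) :
    q₁ = q₂ := by
  have hlog : ∀ x, log (q₁ x) - log (q₂ x) = ∑ c ∈ C, (log (φ₁ c x) - log (φ₂ c x)) := by
    intro x
    have h₁ := (hq₁0 x).ne'
    have h₂ := (hq₂0 x).ne'
    rw [hfact₁] at h₁ ⊢
    rw [hfact₂] at h₂ ⊢
    rw [log_prod_of_prod_ne_zero h₁, log_prod_of_prod_ne_zero h₂, sum_sub_distrib]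
  refine eq_of_sum_mul_log_sub_log_eq hq₁0 hq₂0 ?_
  simp only [hlog, mul_sum]
  rw [sum_comm, sum_comm (s := univ)]
  refine sum_congr rfl fun c hc => sum_mul_eq_of_sum_fiber_eq c.restrict ?_ ?_
  · intro x y hxy
    rw [c.restrict_eq_restrict_iff] at hxy
    rw [hφ₁loc c hc x y hxy, hφ₂loc c hc x y hxy]
  · simpa only [c.restrict_eq_restrict_iff] using hmarg c hc

/-- Uniqueness of the maximum-entropy factorized distribution: two full-support
pmfs that both factor over the same family of blocks with strictly positive
potentials and have the same block marginals must be equal. -/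
theorem stmt_19 {I V : Type*} [Fintype I] [DecidableEq I] [Fintype V] [DecidableEq V]
    (C : Finset (Finset I))
    (q₁ q₂ : (I → V) → ℝ)
    (hq₁0 : ∀ x, 0 < q₁ x) (hq₁1 : ∑ x, q₁ x = 1)
    (hq₂0 : ∀ x, 0 < q₂ x) (hq₂1 : ∑ x, q₂ x = 1)
    (φ₁ φ₂ : Finset I → (I → V) → ℝ)
    (hφ₁pos : ∀ c ∈ C, ∀ x, 0 < φ₁ c x)
    (hφ₂pos : ∀ c ∈ C, ∀ x, 0 < φ₂ c x)
    (hφ₁loc : ∀ c ∈ C, ∀ x y : I → V, (∀ i ∈ c, x i = y i) → φ₁ c x = φ₁ c y)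
    (hφ₂loc : ∀ c ∈ C, ∀ x y : I → V, (∀ i ∈ c, x i = y i) → φ₂ c x = φ₂ c y)
    (hfact₁ : ∀ x, q₁ x = ∏ c ∈ C, φ₁ c x)
    (hfact₂ : ∀ x, q₂ x = ∏ c ∈ C, φ₂ c x)
    (hmarg : ∀ c ∈ C, ∀ x : I → V,
      (∑ y ∈ Finset.univ.filter (fun y => ∀ i ∈ c, y i = x i), q₁ y) =
        ∑ y ∈ Finset.univ.filter (fun y => ∀ i ∈ c, y i = x i), q₂ y) :
    q₁ = q₂ :=
  stmt_19_general C q₁ q₂ hq₁0 hq₂0 φ₁ φ₂ hφ₁loc hφ₂loc hfact₁ hfact₂ hmarg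
end
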